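/- Let φ be an automorphism of a group G of finite order in Out(G) — i.e., some power φᵏ (k ≥ 1) is an inner automorphism given by conjugation by h ∈ G with φ(h)=h. Then the semidirect product G ⋊_φ ℤ contains a finite index subgroup isomorphic to G × ℤ. -/
import Mathlib


abbrev MappingTorus (G : Type*) [Group G] (φ : MulAut G) :=
  G ⋊[zpowersHom (MulAut G) φ] Multiplicative ℤ

theorem mappingTorus_virtually_product {G : Type*} [Group G] (φ : MulAut G)
    (k : ℕ) (hk : 1 ≤ k) (h : G) (hfix : φ h = h)
    (hpow : φ ^ k = MulAut.conj h) :
    ∃ H : Subgroup (MappingTorus G φ), H.FiniteIndex ∧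
      Nonempty (H ≃* G × Multiplicative ℤ) := by
  -- key: φ^(k*n) = conj (h^n)
  have key : ∀ (n : ℤ) (x : G), (φ ^ (k * n) : MulAut G) x = h ^ n * x * h ^ (-n) := by
    intro n x
    have : (φ ^ (k * n) : MulAut G) = MulAut.conj (h ^ n) := by
      rw [map_zpow, ← hpow, ← zpow_natCast, ← zpow_mul]
    rw [this, zpow_neg]
    rfl
  -- ψ : G × ℤ →* MappingTorus
  have hψmul : ∀ p q : G × Multiplicative ℤ,
      (⟨(p.1 * q.1) * h ^ (-(p.2.toAdd + q.2.toAdd)),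
        Multiplicative.ofAdd (k * (p.2.toAdd + q.2.toAdd))⟩ : MappingTorus G φ) =
      (⟨p.1 * h ^ (-p.2.toAdd), Multiplicative.ofAdd (k * p.2.toAdd)⟩ : MappingTorus G φ) *
      ⟨q.1 * h ^ (-q.2.toAdd), Multiplicative.ofAdd (k * q.2.toAdd)⟩ := by
    intro p q
    ext
    · show p.1 * q.1 * h ^ (-(p.2.toAdd + q.2.toAdd)) =
        (p.1 * h ^ (-p.2.toAdd)) *
          (zpowersHom (MulAut G) φ (Multiplicative.ofAdd (k * p.2.toAdd)))
            (q.1 * h ^ (-q.2.toAdd))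
      have : (zpowersHom (MulAut G) φ (Multiplicative.ofAdd (k * p.2.toAdd)))
            (q.1 * h ^ (-q.2.toAdd)) =
          h ^ p.2.toAdd * (q.1 * h ^ (-q.2.toAdd)) * h ^ (-p.2.toAdd) := by
        simpa [mul_comm] using key p.2.toAdd (q.1 * h ^ (-q.2.toAdd))
      rw [this]
      group
    · show Multiplicative.ofAdd (k * (p.2.toAdd + q.2.toAdd)) =
        Multiplicative.ofAdd (k * p.2.toAdd) * Multiplicative.ofAdd (k * q.2.toAdd)
      rw [← ofAdd_add]
      ring_nf
  let ψ : G × Multiplicative ℤ →* MappingTorus G φ :=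
    MonoidHom.mk' (fun p => ⟨p.1 * h ^ (-(p.2.toAdd)), Multiplicative.ofAdd (k * p.2.toAdd)⟩)
      (fun p q => by simpa using hψmul p q)
  have hkz : (k : ℤ) ≠ 0 := by exact_mod_cast Nat.one_le_iff_ne_zero.mp hk
  have hinj : Function.Injective ψ := by
    intro p q hpq
    have h2 : Multiplicative.ofAdd (k * p.2.toAdd) = Multiplicative.ofAdd (k * q.2.toAdd) :=
      congrArg SemidirectProduct.right hpq
    have h2' : p.2.toAdd = q.2.toAdd := by
      have := Multiplicative.ofAdd.injective h2
      exact mul_left_cancel₀ hkz this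
    have h1 : p.1 * h ^ (-(p.2.toAdd)) = q.1 * h ^ (-(q.2.toAdd)) :=
      congrArg SemidirectProduct.left hpq
    rw [h2'] at h1
    have h1' : p.1 = q.1 := mul_right_cancel h1
    exact Prod.ext h1' (by simpa using congrArg Multiplicative.ofAdd h2')
  refine ⟨ψ.range, ?_, ⟨(MonoidHom.ofInjective hinj).symm⟩⟩
  -- finite index: range contains the kernel of mod-k projection
  haveI : NeZero k := ⟨Nat.one_le_iff_ne_zero.mp hk⟩
  let π : MappingTorus G φ →* Multiplicative (ZMod k) :=
    (AddMonoidHom.toMultiplicative (Int.castAddHom (ZMod k))).comp SemidirectProduct.rightHom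
  have hle : π.ker ≤ ψ.range := by
    intro x hx
    have hx' : ((x.right.toAdd : ℤ) : ZMod k) = 0 := by
      simpa [π, MonoidHom.mem_ker, SemidirectProduct.rightHom] using hx
    obtain ⟨n, hn⟩ := (ZMod.intCast_zmod_eq_zero_iff_dvd _ k).mp hx' 
    refine ⟨(x.left * h ^ n, Multiplicative.ofAdd n), ?_⟩
    show (⟨x.left * h ^ n * h ^ (-n), Multiplicative.ofAdd (k * n)⟩ : MappingTorus G φ) = x
    ext
    · show x.left * h ^ n * h ^ (-n) = x.left
      group
    · show Multiplicative.ofAdd (k * n) = x.right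
      rw [← hn]
      simp
  haveI : π.ker.FiniteIndex := Subgroup.finiteIndex_ker π
  exact Subgroup.finiteIndex_of_le hle
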